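/- Rayleigh's monotonicity law: Let G be a finite connected graph and let C, C' : E(G) → (0,∞) be two assignments of conductances with C(e) ≤ C'(e) for every edge e. Then for all pairs of vertices i, j, the effective resistances satisfy R_{C'}(i,j) ≤ R_C(i,j). -/
import Mathlib


/-- `θ` is a unit flow from `u` to `v` on the graph `G`. -/
def IsUnitFlow {V : Type*} [Fintype V] (G : SimpleGraph V) (u v : V) (θ : V → V → ℝ) : Prop :=
  (∀ x y, θ x y = -θ y x) ∧
  (∀ x y, ¬ G.Adj x y → θ x y = 0) ∧
  (∀ x, x ≠ u → x ≠ v → ∑ y, θ x y = 0) ∧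
  (∑ y, θ u y = 1)

/-- The energy dissipated by a flow `θ` in a network with conductances `C` on the edges:
`∑_e θ(e)²/C(e)`, each undirected edge counted once. -/
noncomputable def flowEnergyC {V : Type*} [Fintype V] (C : V → V → ℝ) (θ : V → V → ℝ) : ℝ :=
  (1 / 2) * ∑ x, ∑ y, (θ x y) ^ 2 / C x y

/-- The effective resistance between `u` and `v` in the network `(G, C)`:
the minimal energy dissipated by a unit flow from `u` to `v`. -/
noncomputable def effResC {V : Type*} [Fintype V] (G : SimpleGraph V) (C : V → V → ℝ)
    (u v : V) : ℝ :=
  sInf {E | ∃ θ, IsUnitFlow G u v θ ∧ flowEnergyC C θ = E}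

section aux
variable {V : Type*} [Fintype V] {G : SimpleGraph V}

private lemma total_sum_zero {θ : V → V → ℝ} (ha : ∀ x y, θ x y = -θ y x) :
    ∑ x, ∑ y, θ x y = 0 := by
  have h2 : ∑ x, ∑ y, θ x y = -∑ x, ∑ y, θ x y := by
    conv_lhs => rw [Finset.sum_comm]
    calc ∑ y, ∑ x, θ x y = ∑ y, ∑ x, -θ y x :=
          Finset.sum_congr rfl fun y _ => Finset.sum_congr rfl fun x _ => ha x y
      _ = -∑ y, ∑ x, θ y x := by simp
  linarith

private lemma flow_into {u v : V} {θ : V → V → ℝ} (h : IsUnitFlow G u v θ) (huv : u ≠ v) :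
    ∑ y, θ v y = -1 := by
  classical
  obtain ⟨ha, _, hnode, hu⟩ := h
  have htot := total_sum_zero ha
  rw [← Finset.add_sum_erase _ _ (Finset.mem_univ v)] at htot
  have hrest : ∑ x ∈ Finset.univ.erase v, ∑ y, θ x y = 1 := by
    rw [Finset.sum_eq_single_of_mem u
      (Finset.mem_erase.mpr ⟨huv, Finset.mem_univ u⟩)
      (fun x hx hxu => hnode x hxu (Finset.ne_of_mem_erase hx))]
    exact hu
  linarith

private lemma no_flow_self {u : V} (θ : V → V → ℝ) : ¬ IsUnitFlow G u u θ := by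
  rintro ⟨ha, _, hnode, hu⟩
  have htot := total_sum_zero ha
  have h1 : ∑ x, ∑ y, θ x y = 1 := by
    rw [Finset.sum_eq_single u]
    · exact hu
    · intro x _ hx; exact hnode x hx hx
    · simp
  linarith

private lemma edge_flow [DecidableEq V] {u w : V} (hadj : G.Adj u w) :
    IsUnitFlow G u w (fun x y => if x = u ∧ y = w then 1 else if x = w ∧ y = u then -1 else 0) := by
  classical
  have hne := hadj.ne
  refine ⟨?_, ?_, ?_, ?_⟩
  · intro x y
    by_cases h1 : x = u ∧ y = w
    · obtain ⟨rfl, rfl⟩ := h1; simp [hne, hne.symm]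
    · by_cases h2 : x = w ∧ y = u
      · obtain ⟨rfl, rfl⟩ := h2; simp [hne, hne.symm]
      · have h1' : ¬ (y = w ∧ x = u) := fun hc => h1 ⟨hc.2, hc.1⟩
        have h2' : ¬ (y = u ∧ x = w) := fun hc => h2 ⟨hc.2, hc.1⟩
        simp [h1, h2, h1', h2']
  · intro x y hxy
    by_cases h1 : x = u ∧ y = w
    · obtain ⟨rfl, rfl⟩ := h1; exact absurd hadj hxy
    · by_cases h2 : x = w ∧ y = u
      · obtain ⟨rfl, rfl⟩ := h2; exact absurd hadj.symm hxy
      · simp [h1, h2]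
  · intro x hxu hxw
    have hz : ∀ y, (if x = u ∧ y = w then (1:ℝ) else if x = w ∧ y = u then -1 else 0) = 0 := by
      intro y; simp [hxu, hxw]
    calc (∑ y, if x = u ∧ y = w then (1:ℝ) else if x = w ∧ y = u then -1 else 0)
        = ∑ _y : V, (0:ℝ) := Finset.sum_congr rfl fun y _ => hz y
      _ = 0 := by simp
  · have hz : ∀ y, (if u = u ∧ y = w then (1:ℝ) else if u = w ∧ y = u then -1 else 0)
        = if y = w then 1 else 0 := by
      intro y; simp [hne]
    rw [Finset.sum_congr rfl (fun y _ => hz y)]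
    simp

private lemma exists_unit_flow [DecidableEq V] : ∀ {u v : V}, G.Walk u v → u ≠ v →
    ∃ θ, IsUnitFlow G u v θ := by
  classical
  intro u v p
  induction p with
  | nil => exact fun huv => absurd rfl huv
  | @cons u w v hadj p ih =>
    intro huv
    by_cases hwv : w = v
    · subst hwv
      exact ⟨_, edge_flow hadj⟩
    · obtain ⟨θ2, hθ2⟩ := ih hwv
      have hne := hadj.ne
      set θ1 : V → V → ℝ :=
        fun x y => if x = u ∧ y = w then 1 else if x = w ∧ y = u then -1 else 0 with hθ1def
      have hθ1 : IsUnitFlow G u w θ1 := edge_flow hadj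
      refine ⟨fun x y => θ1 x y + θ2 x y, ?_, ?_, ?_, ?_⟩
      · intro x y; dsimp only; rw [hθ1.1 x y, hθ2.1 x y]; ring
      · intro x y hxy; dsimp only; rw [hθ1.2.1 x y hxy, hθ2.2.1 x y hxy]; ring
      · intro x hxu hxv
        rw [Finset.sum_add_distrib]
        by_cases hxw : x = w
        · subst hxw
          have h1 : ∑ y, θ1 x y = -1 := flow_into hθ1 hne
          have h2 : ∑ y, θ2 x y = 1 := hθ2.2.2.2
          linarith
        · rw [hθ1.2.2.1 x hxu hxw, hθ2.2.2.1 x hxw hxv]; ring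
      · rw [Finset.sum_add_distrib, hθ1.2.2.2, hθ2.2.2.1 u hne huv]
        ring

private lemma energy_nonneg {u v : V} {θ : V → V → ℝ} (hθ : IsUnitFlow G u v θ)
    {C : V → V → ℝ} (hCpos : ∀ x y, G.Adj x y → 0 < C x y) :
    0 ≤ flowEnergyC C θ := by
  unfold flowEnergyC
  have : 0 ≤ ∑ x, ∑ y, (θ x y) ^ 2 / C x y := by
    refine Finset.sum_nonneg fun x _ => Finset.sum_nonneg fun y _ => ?_
    by_cases hadj : G.Adj x y
    · exact div_nonneg (sq_nonneg _) (hCpos x y hadj).le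
    · rw [hθ.2.1 x y hadj]; simp
  linarith

private lemma energy_mono {u v : V} {θ : V → V → ℝ} (hθ : IsUnitFlow G u v θ)
    {C C' : V → V → ℝ} (hCpos : ∀ x y, G.Adj x y → 0 < C x y)
    (hle : ∀ x y, G.Adj x y → C x y ≤ C' x y) :
    flowEnergyC C' θ ≤ flowEnergyC C θ := by
  unfold flowEnergyC
  have hsum : ∑ x, ∑ y, (θ x y) ^ 2 / C' x y ≤ ∑ x, ∑ y, (θ x y) ^ 2 / C x y := by
    refine Finset.sum_le_sum fun x _ => Finset.sum_le_sum fun y _ => ?_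
    by_cases hadj : G.Adj x y
    · exact div_le_div_of_nonneg_left (sq_nonneg _) (hCpos x y hadj) (hle x y hadj)
    · rw [hθ.2.1 x y hadj]; simp
  linarith

end aux

/-- **Rayleigh's monotonicity law.** If `C(e) ≤ C'(e)` for every edge `e` of a finite
connected graph `G` (both assignments being positive conductances), then
`R_{C'}(i,j) ≤ R_C(i,j)` for all pairs of vertices `i, j`. -/
theorem rayleigh_monotonicity {V : Type*} [Fintype V] (G : SimpleGraph V)
    (hG : G.Connected) (C C' : V → V → ℝ)
    (hCpos : ∀ x y, G.Adj x y → 0 < C x y) (hC'pos : ∀ x y, G.Adj x y → 0 < C' x y)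
    (hCsymm : ∀ x y, C x y = C y x) (hC'symm : ∀ x y, C' x y = C' y x)
    (hle : ∀ x y, G.Adj x y → C x y ≤ C' x y) (i j : V) :
    effResC G C' i j ≤ effResC G C i j := by
  classical
  by_cases hij : i = j
  · subst hij
    have hempty : ∀ D : V → V → ℝ,
        {E | ∃ θ, IsUnitFlow G i i θ ∧ flowEnergyC D θ = E} = (∅ : Set ℝ) := by
      intro D
      ext E
      simp only [Set.mem_setOf_eq, Set.mem_empty_iff_false, iff_false]
      rintro ⟨θ, hθ, -⟩
      exact no_flow_self θ hθ
    unfold effResC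
    rw [hempty C, hempty C']
  · have hbdd : BddBelow {E | ∃ θ, IsUnitFlow G i j θ ∧ flowEnergyC C' θ = E} := by
      refine ⟨0, fun E hE => ?_⟩
      obtain ⟨θ, hθ, rfl⟩ := hE
      exact energy_nonneg hθ hC'pos
    have hne : {E | ∃ θ, IsUnitFlow G i j θ ∧ flowEnergyC C θ = E}.Nonempty := by
      obtain ⟨θ, hθ⟩ := exists_unit_flow ((hG i j).some) hij
      exact ⟨flowEnergyC C θ, θ, hθ, rfl⟩
    refine le_csInf hne ?_
    rintro E ⟨θ, hθ, rfl⟩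
    calc effResC G C' i j ≤ flowEnergyC C' θ :=
          csInf_le hbdd ⟨θ, hθ, rfl⟩
      _ ≤ flowEnergyC C θ := energy_mono hθ hCpos hle
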